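/- Let G be the group of matrices [[1,b],[0,a]] with a ∈ Q*, b ∈ Q, and let H be the subgroup of matrices [[1,η],[0,ξ]] with η ∈ Z_(2) (rationals with odd denominator) and ξ a unit of Z_(2) (odd numerator and denominator). Then H is protonormal in G: for every x ∈ G, (x⁻¹Hx)H = H(x⁻¹Hx); but H is not subnormal in G: there exist x ∈ G and h, k ∈ H with (xhx⁻¹)k(xhx⁻¹)⁻¹ ∉ H. -/

import Mathlib

/-!
Conjugation by `[[1, c], [0, d]]` sends `[[1, η], [0, ξ]]` to `[[1, c (1 - ξ) + η d], [0, ξ]]`,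
so a product `(x⁻¹ h x) h'` refactors as `h₁ (x⁻¹ h₂ x)`, where the diagonal entry of `h₂` is
`w = 1 - ξ' + ξ' ξ` for the diagonal entries `ξ, ξ'` of `h, h'`. Every unit of `ℤ_(2)` is
`≡ 1 (mod 2)`, hence so is `w`, which is therefore again a unit and puts `h₁, h₂` in `H`; the
reverse inclusion follows by taking inverses. Subnormality fails because conjugating by
`diag(1, 4)` turns the translation `1` into `1/4`, and conjugating `diag(1, 3)` by that
translation gives the translation `1/4 · (3 - 1) = 1/2 ∉ ℤ_(2)`.
-/

open scoped Pointwise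
open Matrix

lemma Subgroup.coe_mul_eq_of_subset {G : Type*} [Group G] {A B : Subgroup G}
    (h : (A : Set G) * B ⊆ B * A) : (A : Set G) * B = B * A :=
  h.antisymm <| by simpa [_root_.mul_inv_rev] using Set.inv_subset_inv.mpr h

lemma Subring.coe_units_ne_zero {K : Type*} [Field K] {R : Subring K} (u : Rˣ) :
    ((u : R) : K) ≠ 0 := by
  simp

lemma Subring.coe_units_inv {K : Type*} [Field K] {R : Subring K} (u : Rˣ) :
    (((u⁻¹ : Rˣ) : R) : K) = ((u : R) : K)⁻¹ :=
  map_units_inv R.subtype u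

namespace AffineGL

variable {K : Type*} [Field K]

def affineMatrix (b a : K) (ha : a ≠ 0) : GL (Fin 2) K :=
  .mkOfDetNeZero !![1, b; 0, a] (by simpa [det_fin_two_of] using ha)

@[simp] lemma coe_affineMatrix (b a : K) (ha : a ≠ 0) :
    (affineMatrix b a ha : Matrix (Fin 2) (Fin 2) K) = !![1, b; 0, a] := rfl

lemma affineMatrix_inj {b a b' a' : K} {ha : a ≠ 0} {ha' : a' ≠ 0} :
    affineMatrix b a ha = affineMatrix b' a' ha' ↔ b = b' ∧ a = a' := by
  simp [Matrix.GeneralLinearGroup.ext_iff, Fin.forall_fin_two]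

lemma affineMatrix_mul (b a b' a' : K) (ha : a ≠ 0) (ha' : a' ≠ 0) :
    affineMatrix b a ha * affineMatrix b' a' ha' =
      affineMatrix (b' + b * a') (a * a') (mul_ne_zero ha ha') := by
  ext i j; fin_cases i <;> fin_cases j <;> simp [Matrix.mul_apply, Fin.sum_univ_two]

lemma affineMatrix_inv (b a : K) (ha : a ≠ 0) :
    (affineMatrix b a ha)⁻¹ = affineMatrix (-b * a⁻¹) a⁻¹ (inv_ne_zero ha) := by
  rw [inv_eq_iff_mul_eq_one, affineMatrix_mul]
  ext i j; fin_cases i <;> fin_cases j <;> simp [ha]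

lemma affineMatrix_conj (c d b a : K) (hd : d ≠ 0) (ha : a ≠ 0) :
    (affineMatrix c d hd)⁻¹ * affineMatrix b a ha * affineMatrix c d hd =
      affineMatrix (c * (1 - a) + b * d) a ha := by
  rw [affineMatrix_inv, affineMatrix_mul, affineMatrix_mul, affineMatrix_inj]
  constructor
  · field_simp; ring
  · field_simp

lemma eq_affineMatrix {M : GL (Fin 2) K} (h00 : (M : Matrix (Fin 2) (Fin 2) K) 0 0 = 1)
    (h10 : (M : Matrix (Fin 2) (Fin 2) K) 1 0 = 0) :
    ∃ ha, M = affineMatrix ((M : Matrix (Fin 2) (Fin 2) K) 0 1)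
      ((M : Matrix (Fin 2) (Fin 2) K) 1 1) ha := by
  have hdet := M.det_ne_zero
  rw [det_fin_two, h00, h10] at hdet
  refine ⟨by simpa using hdet, ?_⟩
  ext i j; fin_cases i <;> fin_cases j <;> simp [h00, h10]

variable (K) in
def affineGroup : Subgroup (GL (Fin 2) K) where
  carrier := {M | (M : Matrix (Fin 2) (Fin 2) K) 0 0 = 1 ∧
    (M : Matrix (Fin 2) (Fin 2) K) 1 0 = 0}
  one_mem' := by simp
  mul_mem' := by
    rintro A B ⟨hA1, hA0⟩ ⟨hB1, hB0⟩
    simp [Matrix.mul_apply, Fin.sum_univ_two, hA1, hA0, hB1, hB0]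
  inv_mem' := by
    rintro A ⟨hA1, hA0⟩
    obtain ⟨ha, hA⟩ := eq_affineMatrix hA1 hA0
    rw [hA, affineMatrix_inv]
    simp

lemma affineMatrix_mem_affineGroup (b a : K) (ha : a ≠ 0) :
    affineMatrix b a ha ∈ affineGroup K := by
  simp [affineGroup]

lemma exists_eq_affineMatrix {M : GL (Fin 2) K} (hM : M ∈ affineGroup K) :
    ∃ b a ha, M = affineMatrix b a ha :=
  ⟨_, _, eq_affineMatrix hM.1 hM.2⟩

def affineGroupOver (R : Subring K) : Subgroup (GL (Fin 2) K) where
  carrier := {M | M ∈ affineGroup K ∧ (M : Matrix (Fin 2) (Fin 2) K) 0 1 ∈ R ∧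
    ∃ u : Rˣ, ((u : R) : K) = (M : Matrix (Fin 2) (Fin 2) K) 1 1}
  one_mem' := ⟨(affineGroup K).one_mem, by simp, 1, by simp⟩
  mul_mem' := by
    rintro A B ⟨hA, hAb, u, hu⟩ ⟨hB, hBb, v, hv⟩
    obtain ⟨b, a, ha, rfl⟩ := exists_eq_affineMatrix hA
    obtain ⟨b', a', ha', rfl⟩ := exists_eq_affineMatrix hB
    simp only [coe_affineMatrix, of_apply, cons_val', cons_val_zero, cons_val_one,
      cons_val_fin_one] at hAb hu hBb hv
    rw [affineMatrix_mul]
    refine ⟨affineMatrix_mem_affineGroup .., ?_, u * v, ?_⟩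
    · simpa using R.add_mem hBb (R.mul_mem hAb (hv ▸ (v : R).2))
    · simp [hu, hv]
  inv_mem' := by
    rintro A ⟨hA, hAb, u, hu⟩
    obtain ⟨b, a, ha, rfl⟩ := exists_eq_affineMatrix hA
    simp only [coe_affineMatrix, of_apply, cons_val', cons_val_zero, cons_val_one,
      cons_val_fin_one] at hAb hu
    rw [affineMatrix_inv]
    refine ⟨affineMatrix_mem_affineGroup .., ?_, u⁻¹, ?_⟩
    · simpa [← hu, Subring.coe_units_inv] using R.neg_mem (R.mul_mem hAb (u⁻¹ : Rˣ).val.2)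
    · simp [hu, Subring.coe_units_inv]

lemma affineMatrix_mem_affineGroupOver_iff {R : Subring K} {b a : K} {ha : a ≠ 0} :
    affineMatrix b a ha ∈ affineGroupOver R ↔ b ∈ R ∧ ∃ u : Rˣ, ((u : R) : K) = a := by
  simp [affineGroupOver, affineMatrix_mem_affineGroup]

lemma exists_eq_affineMatrix_of_mem_affineGroupOver {R : Subring K} {M : GL (Fin 2) K}
    (hM : M ∈ affineGroupOver R) :
    ∃ b ∈ R, ∃ u : Rˣ, M = affineMatrix b u (Subring.coe_units_ne_zero u) := by
  obtain ⟨hG, hb, u, hu⟩ := hM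
  obtain ⟨b, a, ha, rfl⟩ := exists_eq_affineMatrix hG
  simp only [coe_affineMatrix, of_apply, cons_val', cons_val_zero, cons_val_one,
    cons_val_fin_one] at hb hu
  exact ⟨b, hb, u, by rw [affineMatrix_inj]; exact ⟨rfl, hu.symm⟩⟩

lemma conj_affineMatrix_mul_affineMatrix (c d b a b' a' w : K) (hd : d ≠ 0) (ha : a ≠ 0)
    (ha' : a' ≠ 0) (hw : w ≠ 0) (hw_eq : w = 1 - a' + a' * a) :
    (affineMatrix c d hd)⁻¹ * affineMatrix b a ha * affineMatrix c d hd *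
        affineMatrix b' a' ha' =
      affineMatrix (b' / w) (a * a' / w) (div_ne_zero (mul_ne_zero ha ha') hw) *
        ((affineMatrix c d hd)⁻¹ * affineMatrix (b * a') w hw * affineMatrix c d hd) := by
  rw [affineMatrix_conj, affineMatrix_conj, affineMatrix_mul, affineMatrix_mul, affineMatrix_inj,
    div_mul_cancel₀ _ hw, div_mul_cancel₀ _ hw, hw_eq]
  constructor <;> ring

lemma conj_image_mul_subset {R : Subring K} (hR : ∀ u v : Rˣ, IsUnit (1 - (u : R) + u * v))
    {x : GL (Fin 2) K} (hx : x ∈ affineGroup K) :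
    (fun g => x⁻¹ * g * x) '' (affineGroupOver R : Set (GL (Fin 2) K)) * affineGroupOver R ⊆
      affineGroupOver R *
        (fun g => x⁻¹ * g * x) '' (affineGroupOver R : Set (GL (Fin 2) K)) := by
  obtain ⟨c, d, hd, rfl⟩ := exists_eq_affineMatrix hx
  rintro _ ⟨_, ⟨g, hg, rfl⟩, g', hg', rfl⟩
  obtain ⟨b, hb, u, rfl⟩ := exists_eq_affineMatrix_of_mem_affineGroupOver hg
  obtain ⟨b', hb', u', rfl⟩ := exists_eq_affineMatrix_of_mem_affineGroupOver hg'
  obtain ⟨w, hw⟩ := hR u' u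
  dsimp only
  rw [conj_affineMatrix_mul_affineMatrix c d _ _ _ _ _ hd _ _ (Subring.coe_units_ne_zero w)
    (by simp [hw])]
  refine Set.mul_mem_mul ?_ ⟨_, ?_, rfl⟩ <;>
    rw [SetLike.mem_coe, affineMatrix_mem_affineGroupOver_iff]
  · refine ⟨?_, u * u' * w⁻¹, by simp [div_eq_mul_inv, Subring.coe_units_inv]⟩
    simpa [div_eq_mul_inv, Subring.coe_units_inv] using R.mul_mem hb' (w⁻¹ : Rˣ).val.2
  · exact ⟨R.mul_mem hb (u' : R).2, w, rfl⟩

theorem conj_image_mul_eq_mul_conj_image {R : Subring K}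
    (hR : ∀ u v : Rˣ, IsUnit (1 - (u : R) + u * v)) {x : GL (Fin 2) K}
    (hx : x ∈ affineGroup K) :
    (fun g => x⁻¹ * g * x) '' (affineGroupOver R : Set (GL (Fin 2) K)) * affineGroupOver R =
      affineGroupOver R *
        (fun g => x⁻¹ * g * x) '' (affineGroupOver R : Set (GL (Fin 2) K)) := by
  have hconj : (fun g => x⁻¹ * g * x) '' (affineGroupOver R : Set (GL (Fin 2) K)) =
      (affineGroupOver R).map (MulAut.conj x⁻¹).toMonoidHom := by
    simp [Set.image]
  have h := conj_image_mul_subset hR hx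
  rw [hconj] at h ⊢
  exact Subgroup.coe_mul_eq_of_subset h

end AffineGL

lemma Rat.odd_num_one_sub_add_mul {x y : ℚ} (hx : Odd x.num ∧ Odd x.den)
    (hy : Odd y.num ∧ Odd y.den) : Odd (1 - x + x * y).num := by
  have hxd : Odd (x.den : ℤ) := by exact_mod_cast hx.2
  have hyd : Odd (y.den : ℤ) := by exact_mod_cast hy.2
  have hD : (x.den * y.den : ℤ) ≠ 0 := by positivity
  have hN : Odd (x.den * y.den + x.num * (y.num - y.den)) :=
    (hxd.mul hyd).add_even ((hy.1.sub_odd hyd).mul_left _)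
  have heq : 1 - x + x * y =
      Rat.divInt (x.den * y.den + x.num * (y.num - y.den)) (x.den * y.den) := by
    rw [Rat.divInt_eq_div]
    conv_lhs => rw [← Rat.num_div_den x, ← Rat.num_div_den y]
    push_cast
    field_simp
    ring
  obtain ⟨c, hc⟩ := Rat.num_dvd (x.den * y.den + x.num * (y.num - y.den)) hD
  rw [heq]
  rw [hc] at hN
  exact (Int.odd_mul.mp hN).1

def oddDenSubring : Subring ℚ where
  carrier := {q | Odd q.den}
  one_mem' := by simp
  zero_mem' := by simp
  add_mem' {p q} hp hq := (hp.mul hq).of_dvd_nat (Rat.add_den_dvd p q)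
  mul_mem' {p q} hp hq := (hp.mul hq).of_dvd_nat (Rat.mul_den_dvd p q)
  neg_mem' {q} hq := by simpa [Rat.den_neg_eq_den] using hq

namespace oddDenSubring

lemma mem_iff {q : ℚ} : q ∈ oddDenSubring ↔ Odd q.den := Iff.rfl

lemma isUnit_iff_odd_num {x : oddDenSubring} : IsUnit x ↔ Odd (x : ℚ).num := by
  constructor
  · rintro ⟨u, rfl⟩
    have hinv : Odd ((u : ℚ)⁻¹).den := by
      simpa [Subring.coe_units_inv] using mem_iff.mp (u⁻¹ : oddDenSubringˣ).val.2
    rwa [Rat.den_inv_of_ne_zero (Subring.coe_units_ne_zero u), Int.natAbs_odd] at hinv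
  · intro hx
    have hx0 : (x : ℚ) ≠ 0 := fun h => by simp [h] at hx
    have hinv : (x : ℚ)⁻¹ ∈ oddDenSubring := by
      rw [mem_iff, Rat.den_inv_of_ne_zero hx0, Int.natAbs_odd]; exact hx
    exact IsUnit.of_mul_eq_one ⟨_, hinv⟩ (Subtype.ext (mul_inv_cancel₀ hx0))

lemma exists_units_coe_eq_iff {q : ℚ} :
    (∃ u : oddDenSubringˣ, ((u : oddDenSubring) : ℚ) = q) ↔ Odd q.num ∧ Odd q.den := by
  constructor
  · rintro ⟨u, rfl⟩
    exact ⟨isUnit_iff_odd_num.mp u.isUnit, (u : oddDenSubring).2⟩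
  · rintro ⟨hn, hd⟩
    exact ⟨(isUnit_iff_odd_num.mpr hn : IsUnit (⟨q, hd⟩ : oddDenSubring)).unit, rfl⟩

lemma isUnit_one_sub_add_mul (u v : oddDenSubringˣ) :
    IsUnit (1 - (u : oddDenSubring) + u * v) := by
  rw [isUnit_iff_odd_num]
  push_cast
  exact Rat.odd_num_one_sub_add_mul (exists_units_coe_eq_iff.mp ⟨u, rfl⟩)
    (exists_units_coe_eq_iff.mp ⟨v, rfl⟩)

end oddDenSubring

open AffineGL

lemma mem_affineGroupOver_oddDenSubring_iff {M : GL (Fin 2) ℚ} :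
    M ∈ affineGroupOver oddDenSubring ↔
      M ∈ affineGroup ℚ ∧ Odd ((M : Matrix (Fin 2) (Fin 2) ℚ) 0 1).den ∧
        Odd ((M : Matrix (Fin 2) (Fin 2) ℚ) 1 1).den ∧
        Odd ((M : Matrix (Fin 2) (Fin 2) ℚ) 1 1).num := by
  change _ ∧ _ ∧ _ ↔ _
  rw [oddDenSubring.exists_units_coe_eq_iff, and_comm (a := Odd (Rat.num _))]
  rfl

lemma exists_conj_mul_conj_inv_not_mem_affineGroupOver_oddDenSubring :
    ∃ x ∈ affineGroup ℚ, ∃ h ∈ affineGroupOver oddDenSubring,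
      ∃ k ∈ affineGroupOver oddDenSubring,
        (x * h * x⁻¹) * k * (x * h * x⁻¹)⁻¹ ∉ affineGroupOver oddDenSubring := by
  refine ⟨affineMatrix 0 4 four_ne_zero, affineMatrix_mem_affineGroup ..,
    affineMatrix 1 1 one_ne_zero, ?_, affineMatrix 0 3 three_ne_zero, ?_, ?_⟩
  · simp [mem_affineGroupOver_oddDenSubring_iff, affineMatrix_mem_affineGroup]
  · simp [mem_affineGroupOver_oddDenSubring_iff, affineMatrix_mem_affineGroup, Int.odd_iff]
  have hval : affineMatrix (0 : ℚ) 4 four_ne_zero * affineMatrix 1 1 one_ne_zero *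
        (affineMatrix 0 4 four_ne_zero)⁻¹ * affineMatrix 0 3 three_ne_zero *
        (affineMatrix 0 4 four_ne_zero * affineMatrix 1 1 one_ne_zero *
          (affineMatrix 0 4 four_ne_zero)⁻¹)⁻¹ = affineMatrix (1 / 2) 3 three_ne_zero := by
    simp only [affineMatrix_inv, affineMatrix_mul, affineMatrix_inj]
    norm_num
  rw [hval, mem_affineGroupOver_oddDenSubring_iff]
  norm_num

/-- Let `G` be the group of rational matrices `[[1, b], [0, a]]` (`a ∈ ℚ*`, `b ∈ ℚ`),
and let `H ≤ G` consist of the matrices `[[1, η], [0, ξ]]` with `η ∈ ℤ_(2)` (odd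
denominator) and `ξ` a unit of `ℤ_(2)` (odd numerator and denominator).  Then `H` is
protonormal in `G`: for every `x ∈ G`, `(x⁻¹Hx)H = H(x⁻¹Hx)` as subsets of `G`;
but `H` is not subnormal in `G`: there exist `x ∈ G` and `h, k ∈ H` with
`(xhx⁻¹)k(xhx⁻¹)⁻¹ ∉ H`. -/
theorem stmt19 :
    ∃ G' H' : Subgroup (GL (Fin 2) ℚ),
      (∀ M : GL (Fin 2) ℚ, M ∈ G' ↔
        (M : Matrix (Fin 2) (Fin 2) ℚ) 0 0 = 1 ∧
        (M : Matrix (Fin 2) (Fin 2) ℚ) 1 0 = 0) ∧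
      (∀ M : GL (Fin 2) ℚ, M ∈ H' ↔
        M ∈ G' ∧ Odd ((M : Matrix (Fin 2) (Fin 2) ℚ) 0 1).den ∧
          Odd ((M : Matrix (Fin 2) (Fin 2) ℚ) 1 1).den ∧
          Odd ((M : Matrix (Fin 2) (Fin 2) ℚ) 1 1).num) ∧
      H' ≤ G' ∧
      (∀ x ∈ G',
        ((fun g => x⁻¹ * g * x) '' (H' : Set (GL (Fin 2) ℚ))) * (H' : Set (GL (Fin 2) ℚ))
          = (H' : Set (GL (Fin 2) ℚ)) *
              ((fun g => x⁻¹ * g * x) '' (H' : Set (GL (Fin 2) ℚ)))) ∧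
      (∃ x ∈ G', ∃ h ∈ H', ∃ k ∈ H',
        (x * h * x⁻¹) * k * (x * h * x⁻¹)⁻¹ ∉ H') :=
  ⟨affineGroup ℚ, affineGroupOver oddDenSubring, fun _ => Iff.rfl,
    fun _ => mem_affineGroupOver_oddDenSubring_iff, fun _ hM => hM.1,
    fun _ => conj_image_mul_eq_mul_conj_image oddDenSubring.isUnit_one_sub_add_mul,
    exists_conj_mul_conj_inv_not_mem_affineGroupOver_oddDenSubring⟩
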